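/- Let 0 < q < 1. For z,t ∈ ℂ with z ≠ 0 and |z| < |t| < |z|^{-1}, the bilateral series ∑_{n=-∞}^∞ t^n z^n G(-z², q^{n+1}) / (q;q)_∞ converges absolutely and equals 1 / ((tz;q)_∞ (-t^{-1}z;q)_∞). (In ₂φ₁ notation the n-th coefficient is z^n (q^{n+1};q)_∞ ₂φ₁(0,0;q^{n+1};q,-z²)/(q;q)_∞, Jackson's first q-Bessel function.) -/

import Mathlib

open Complex Filter

/-- `(a;q)_k`, the finite q-shifted factorial. -/
noncomputable def qPoch (q : ℝ) (a : ℂ) (k : ℕ) : ℂ :=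
  ∏ j ∈ Finset.range k, (1 - a * (q : ℂ) ^ j)

/-- `(a;q)_∞`, the infinite q-shifted factorial. -/
noncomputable def qPochInf (q : ℝ) (a : ℂ) : ℂ :=
  ∏' j : ℕ, (1 - a * (q : ℂ) ^ j)

/-- `G(z,w) = ∑ (q^k w;q)_∞ z^k / (q;q)_k`, so `G(z,w) = (w;q)_∞ ₂φ₁(0,0;w;q,z)` for `|z|<1`. -/
noncomputable def Gqb (q : ℝ) (z w : ℂ) : ℂ :=
  ∑' k : ℕ, qPochInf q ((q : ℂ) ^ k * w) * z ^ k / qPoch q (q : ℂ) k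

/-- `H(z,w) = ∑ q^{k(k-1)} (q^k w;q)_∞ z^k / (q;q)_k`, so `H(z,w) = (w;q)_∞ ₀φ₁(-;w;q,z)`. -/
noncomputable def Hqb (q : ℝ) (z w : ℂ) : ℂ :=
  ∑' k : ℕ, (q : ℂ) ^ (k * (k - 1)) * qPochInf q ((q : ℂ) ^ k * w) * z ^ k / qPoch q (q : ℂ) k

open scoped Topology

lemma hasProd_zero_of_eq_zero {f : ℕ → ℂ} {i : ℕ} (h : f i = 0) : HasProd f 0 := by
  have hev : ∀ᶠ s : Finset ℕ in atTop, ∏ b ∈ s, f b = 0 := by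
    filter_upwards [eventually_ge_atTop ({i} : Finset ℕ)] with s hs
    exact Finset.prod_eq_zero (hs (Finset.mem_singleton_self i)) h
  exact Tendsto.congr' (hev.mono fun s hs => hs.symm) tendsto_const_nhds

variable {q : ℝ}

lemma multipliable_qfac (hq0 : 0 < q) (hq1 : q < 1) (a : ℂ) :
    Multipliable fun j : ℕ => 1 - a * (q : ℂ) ^ j := by
  by_cases h0 : ∃ j, 1 - a * (q : ℂ) ^ j = 0
  · obtain ⟨j, hj⟩ := h0; exact (hasProd_zero_of_eq_zero hj).multipliable
  push_neg at h0
  refine Complex.multipliable_of_summable_log ?_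
  refine Summable.of_norm ?_
  refine Summable.of_norm_bounded_eventually_nat (g := fun n => 3 / 2 * (‖a‖ * q ^ n)) ?_ ?_
  · exact (((summable_geometric_of_lt_one hq0.le hq1).mul_left ‖a‖).mul_left (3 / 2))
  · have hq : Tendsto (fun n : ℕ => ‖a‖ * q ^ n) atTop (𝓝 0) := by
      simpa using (tendsto_pow_atTop_nhds_zero_of_lt_one hq0.le hq1).const_mul ‖a‖
    filter_upwards [hq.eventually_le_const (by norm_num : (0:ℝ) < 1 / 2)] with n hn
    have hnorm : ‖-(a * (q : ℂ) ^ n)‖ = ‖a‖ * q ^ n := by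
      rw [norm_neg, norm_mul, norm_pow, Complex.norm_real, Real.norm_of_nonneg hq0.le]
    have h1 : ‖Complex.log (1 + -(a * (q : ℂ) ^ n))‖ ≤ 3 / 2 * ‖-(a * (q : ℂ) ^ n)‖ :=
      Complex.norm_log_one_add_half_le_self (by rw [hnorm]; exact hn)
    rw [norm_norm]
    calc ‖Complex.log (1 - a * (q : ℂ) ^ n)‖
        = ‖Complex.log (1 + -(a * (q : ℂ) ^ n))‖ := by rw [sub_eq_add_neg]
      _ ≤ 3 / 2 * ‖-(a * (q : ℂ) ^ n)‖ := h1
      _ = 3 / 2 * (‖a‖ * q ^ n) := by rw [hnorm]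

lemma qPochInf_eq_zero {a : ℂ} {j : ℕ} (h : 1 - a * (q : ℂ) ^ j = 0) : qPochInf q a = 0 := by
  rw [qPochInf]
  exact (hasProd_zero_of_eq_zero (f := fun j : ℕ => 1 - a * (q : ℂ) ^ j) h).tprod_eq

lemma qPochInf_split (hq0 : 0 < q) (hq1 : q < 1) (a : ℂ) (K : ℕ) :
    qPochInf q a = qPoch q a K * qPochInf q (a * (q : ℂ) ^ K) := by
  have hsh : Multipliable (fun n : ℕ => 1 - a * (q : ℂ) ^ (n + K)) :=
    (multipliable_qfac hq0 hq1 (a * (q : ℂ) ^ K)).congr fun n => by simp only [pow_add]; ring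
  have h := Multipliable.prod_mul_tprod_nat_mul' (f := fun j : ℕ => 1 - a * (q : ℂ) ^ j) (k := K) hsh
  rw [qPochInf, ← h, qPoch]
  congr 1
  rw [qPochInf]
  exact tprod_congr fun i => by simp only [pow_add]; ring

noncomputable def qR (q : ℝ) (k : ℕ) : ℝ := ∏ j ∈ Finset.range k, (1 - q ^ (j + 1))

lemma qR_pos (hq0 : 0 < q) (hq1 : q < 1) (k : ℕ) : 0 < qR q k :=
  Finset.prod_pos fun j _ => by
    have : q ^ (j + 1) < 1 := pow_lt_one₀ hq0.le hq1 (Nat.succ_ne_zero j)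
    linarith

lemma qR_succ (k : ℕ) : qR q (k + 1) = qR q k * (1 - q ^ (k + 1)) := by
  rw [qR, Finset.prod_range_succ, qR]

lemma qPoch_q_eq (k : ℕ) : qPoch q (q : ℂ) k = ((qR q k : ℝ) : ℂ) := by
  rw [qPoch, qR]
  push_cast
  exact Finset.prod_congr rfl fun j _ => by rw [pow_succ']

lemma qPoch_q_ne (hq0 : 0 < q) (hq1 : q < 1) (k : ℕ) : qPoch q (q : ℂ) k ≠ 0 := by
  rw [qPoch_q_eq]
  exact_mod_cast (qR_pos hq0 hq1 k).ne'

lemma norm_qPoch_q (hq0 : 0 < q) (hq1 : q < 1) (k : ℕ) : ‖qPoch q (q : ℂ) k‖ = qR q k := by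
  rw [qPoch_q_eq, Complex.norm_real, Real.norm_of_nonneg (qR_pos hq0 hq1 k).le]

lemma qPoch_q_succ (k : ℕ) :
    qPoch q (q : ℂ) (k + 1) = qPoch q (q : ℂ) k * (1 - (q : ℂ) ^ (k + 1)) := by
  rw [qPoch, Finset.prod_range_succ, qPoch, pow_succ']

lemma summable_norm_geomPoch (hq0 : 0 < q) (hq1 : q < 1) {x : ℂ} (hx : ‖x‖ < 1) :
    Summable fun k : ℕ => ‖x ^ k / qPoch q (q : ℂ) k‖ := by
  set r : ℝ := (1 + ‖x‖) / 2 with hr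
  have hr1 : r < 1 := by rw [hr]; linarith
  have hxr : ‖x‖ < r := by rw [hr]; linarith
  have hr0 : 0 < r := lt_of_le_of_lt (norm_nonneg x) hxr
  apply summable_of_ratio_norm_eventually_le hr1
  have hlim : Tendsto (fun k : ℕ => q ^ (k + 1)) atTop (𝓝 0) := by
    exact (tendsto_pow_atTop_nhds_zero_of_lt_one hq0.le hq1).comp (tendsto_add_atTop_nat 1)
  have hc : (0:ℝ) < 1 - ‖x‖ / r := by
    have : ‖x‖ / r < 1 := (div_lt_one hr0).2 hxr
    linarith
  filter_upwards [hlim.eventually_le_const hc] with k hk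
  have hq1k : (0:ℝ) < 1 - q ^ (k + 1) := by
    have : q ^ (k + 1) < 1 := pow_lt_one₀ hq0.le hq1 (Nat.succ_ne_zero k)
    linarith
  have hxk : ‖x‖ ≤ r * (1 - q ^ (k + 1)) := by
    have := (div_le_iff₀ hr0).1 (by linarith : ‖x‖ / r ≤ 1 - q ^ (k + 1))
    linarith [this]
  have hRk := qR_pos hq0 hq1 k
  have e1 : ‖x ^ (k + 1) / qPoch q (q : ℂ) (k + 1)‖ = ‖x‖ ^ (k + 1) / (qR q k * (1 - q ^ (k + 1))) := by
    rw [norm_div, norm_pow, norm_qPoch_q hq0 hq1, qR_succ]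
  have e2 : ‖x ^ k / qPoch q (q : ℂ) k‖ = ‖x‖ ^ k / qR q k := by
    rw [norm_div, norm_pow, norm_qPoch_q hq0 hq1]
  rw [Real.norm_of_nonneg (norm_nonneg _), Real.norm_of_nonneg (norm_nonneg _), e1, e2]
  rw [div_le_iff₀ (by positivity), pow_succ]
  have hxknn : (0:ℝ) ≤ ‖x‖ ^ k := by positivity
  calc ‖x‖ ^ k * ‖x‖ ≤ ‖x‖ ^ k * (r * (1 - q ^ (k + 1))) := by
        exact mul_le_mul_of_nonneg_left hxk hxknn
    _ = r * (‖x‖ ^ k / qR q k) * (qR q k * (1 - q ^ (k + 1))) := by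
        field_simp

noncomputable def Sq (q : ℝ) (x : ℂ) : ℂ := ∑' k : ℕ, x ^ k / qPoch q (q : ℂ) k

lemma summable_geomPoch (hq0 : 0 < q) (hq1 : q < 1) {x : ℂ} (hx : ‖x‖ < 1) :
    Summable fun k : ℕ => x ^ k / qPoch q (q : ℂ) k :=
  (summable_norm_geomPoch hq0 hq1 hx).of_norm

lemma Sq_funct (hq0 : 0 < q) (hq1 : q < 1) {x : ℂ} (hx : ‖x‖ < 1) :
    Sq q ((q : ℂ) * x) = (1 - x) * Sq q x := by
  have hs : Summable fun k : ℕ => x ^ k / qPoch q (q : ℂ) k := summable_geomPoch hq0 hq1 hx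
  have hs1 : Summable fun k : ℕ => x ^ (k + 1) / qPoch q (q : ℂ) (k + 1) :=
    (summable_nat_add_iff (f := fun k : ℕ => x ^ k / qPoch q (q : ℂ) k) 1).2 hs
  have hs2 : Summable fun k : ℕ => x ^ (k + 1) / qPoch q (q : ℂ) k :=
    (hs.mul_left x).congr fun k => by rw [pow_succ]; ring
  have hqx : ‖(q : ℂ) * x‖ < 1 := by
    rw [norm_mul, Complex.norm_real, Real.norm_of_nonneg hq0.le]
    calc q * ‖x‖ ≤ 1 * ‖x‖ := by nlinarith [norm_nonneg x]
      _ = ‖x‖ := one_mul _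
      _ < 1 := hx
  have hsq : Summable fun k : ℕ => ((q : ℂ) * x) ^ k / qPoch q (q : ℂ) k :=
    summable_geomPoch hq0 hq1 hqx
  have termwise : ∀ k : ℕ, ((q : ℂ) * x) ^ (k + 1) / qPoch q (q : ℂ) (k + 1) =
      x ^ (k + 1) / qPoch q (q : ℂ) (k + 1) - x ^ (k + 1) / qPoch q (q : ℂ) k := by
    intro k
    rw [qPoch_q_succ]
    have h1 : qPoch q (q : ℂ) k ≠ 0 := qPoch_q_ne hq0 hq1 k
    have h2 : (1 : ℂ) - (q : ℂ) ^ (k + 1) ≠ 0 := by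
      have : qPoch q (q : ℂ) (k + 1) ≠ 0 := qPoch_q_ne hq0 hq1 (k + 1)
      rw [qPoch_q_succ] at this
      exact right_ne_zero_of_mul this
    field_simp
    ring
  have e0 : Sq q ((q : ℂ) * x) = 1 + ∑' k : ℕ, ((q : ℂ) * x) ^ (k + 1) / qPoch q (q : ℂ) (k + 1) := by
    rw [Sq, Summable.tsum_eq_zero_add hsq]
    congr 1
    simp [qPoch]
  have e1 : Sq q x = 1 + ∑' k : ℕ, x ^ (k + 1) / qPoch q (q : ℂ) (k + 1) := by
    rw [Sq, Summable.tsum_eq_zero_add hs]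
    congr 1
    simp [qPoch]
  have e2 : x * Sq q x = ∑' k : ℕ, x ^ (k + 1) / qPoch q (q : ℂ) k := by
    rw [Sq, ← tsum_mul_left]
    exact tsum_congr fun k => by rw [pow_succ]; ring
  rw [e0, tsum_congr termwise, Summable.tsum_sub hs1 hs2, ← e2]
  rw [sub_mul, one_mul, e1]
  ring

lemma Sq_iterate (hq0 : 0 < q) (hq1 : q < 1) {x : ℂ} (hx : ‖x‖ < 1) (N : ℕ) :
    qPoch q x N * Sq q x = Sq q (x * (q : ℂ) ^ N) := by
  induction N with
  | zero => simp [qPoch]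
  | succ N ih =>
    have hxN : ‖x * (q : ℂ) ^ N‖ < 1 := by
      rw [norm_mul, norm_pow, Complex.norm_real, Real.norm_of_nonneg hq0.le]
      have h1 : q ^ N ≤ 1 := pow_le_one₀ hq0.le hq1.le
      calc ‖x‖ * q ^ N ≤ ‖x‖ * 1 := by nlinarith [norm_nonneg x, pow_pos hq0 N]
        _ = ‖x‖ := mul_one _
        _ < 1 := hx
    have hfe := Sq_funct hq0 hq1 hxN
    calc qPoch q x (N + 1) * Sq q x
        = (1 - x * (q : ℂ) ^ N) * (qPoch q x N * Sq q x) := by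
          rw [qPoch, Finset.prod_range_succ, ← qPoch]; ring
      _ = (1 - x * (q : ℂ) ^ N) * Sq q (x * (q : ℂ) ^ N) := by rw [ih]
      _ = Sq q ((q : ℂ) * (x * (q : ℂ) ^ N)) := hfe.symm
      _ = Sq q (x * (q : ℂ) ^ (N + 1)) := by ring_nf

lemma Sq_tail_tendsto (hq0 : 0 < q) (hq1 : q < 1) {x : ℂ} (hx : ‖x‖ < 1) :
    Tendsto (fun N : ℕ => Sq q (x * (q : ℂ) ^ N)) atTop (𝓝 1) := by
  have hq1' : (0:ℝ) < 1 - q := by linarith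
  have hCs : Summable fun k : ℕ => ‖x‖ ^ k / qR q (k + 1) := by
    have hbase : Summable fun k : ℕ => (1 - q)⁻¹ * (‖x‖ ^ k / qR q k) := by
      refine Summable.mul_left _ ?_
      refine (summable_norm_geomPoch hq0 hq1 hx).congr fun k => ?_
      rw [norm_div, norm_pow, norm_qPoch_q hq0 hq1]
    refine Summable.of_nonneg_of_le (fun k => by have := qR_pos hq0 hq1 (k+1); positivity) (fun k => ?_) hbase
    have hRk := qR_pos hq0 hq1 k
    have hRk1 := qR_pos hq0 hq1 (k + 1)
    have hqk : q ^ (k + 1) ≤ q := by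
      calc q ^ (k + 1) = q * q ^ k := by rw [pow_succ']
        _ ≤ q * 1 := by nlinarith [pow_le_one₀ hq0.le hq1.le (n := k), pow_pos hq0 k]
        _ = q := mul_one q
    have hmono : qR q k * (1 - q) ≤ qR q (k + 1) := by
      rw [qR_succ]
      nlinarith
    calc ‖x‖ ^ k / qR q (k + 1) ≤ ‖x‖ ^ k / (qR q k * (1 - q)) := by
          gcongr
      _ = (1 - q)⁻¹ * (‖x‖ ^ k / qR q k) := by
          rw [mul_comm (qR q k) (1 - q), ← div_div, div_eq_mul_inv (‖x‖ ^ k) (1 - q),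
            mul_comm (‖x‖ ^ k) ((1 - q)⁻¹), mul_div_assoc]
  set C : ℝ := ∑' k : ℕ, ‖x‖ ^ k / qR q (k + 1) with hC
  have htail : ∀ y : ℂ, ‖y‖ ≤ ‖x‖ → ‖Sq q y - 1‖ ≤ ‖y‖ * C := by
    intro y hy
    have hy1 : ‖y‖ < 1 := lt_of_le_of_lt hy hx
    have hsy : Summable fun k : ℕ => y ^ k / qPoch q (q : ℂ) k := summable_geomPoch hq0 hq1 hy1
    have hny1 : Summable fun k : ℕ => ‖y ^ (k + 1) / qPoch q (q : ℂ) (k + 1)‖ :=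
      (summable_nat_add_iff (f := fun k : ℕ => ‖y ^ k / qPoch q (q : ℂ) k‖) 1).2
        (summable_norm_geomPoch hq0 hq1 hy1)
    have hSy : Sq q y - 1 = ∑' k : ℕ, y ^ (k + 1) / qPoch q (q : ℂ) (k + 1) := by
      rw [Sq, Summable.tsum_eq_zero_add hsy]
      simp [qPoch]
    rw [hSy]
    calc ‖∑' k : ℕ, y ^ (k + 1) / qPoch q (q : ℂ) (k + 1)‖
        ≤ ∑' k : ℕ, ‖y ^ (k + 1) / qPoch q (q : ℂ) (k + 1)‖ := norm_tsum_le_tsum_norm hny1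
      _ ≤ ∑' k : ℕ, ‖y‖ * (‖x‖ ^ k / qR q (k + 1)) := by
          refine Summable.tsum_le_tsum (fun k => ?_) hny1 (hCs.mul_left ‖y‖)
          rw [norm_div, norm_pow, norm_qPoch_q hq0 hq1]
          have hRk1 := qR_pos hq0 hq1 (k + 1)
          rw [div_le_iff₀ hRk1]
          have : ‖y‖ ^ (k + 1) ≤ ‖y‖ * ‖x‖ ^ k := by
            rw [pow_succ']
            exact mul_le_mul_of_nonneg_left (pow_le_pow_left₀ (norm_nonneg y) hy k) (norm_nonneg y)
          calc ‖y‖ ^ (k + 1) ≤ ‖y‖ * ‖x‖ ^ k := this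
            _ = ‖y‖ * (‖x‖ ^ k / qR q (k + 1)) * qR q (k + 1) := by field_simp
      _ = ‖y‖ * C := by rw [hC, tsum_mul_left]
  have hbound : ∀ N : ℕ, ‖Sq q (x * (q : ℂ) ^ N) - 1‖ ≤ (‖x‖ * C) * q ^ N := by
    intro N
    have hyx : ‖x * (q : ℂ) ^ N‖ ≤ ‖x‖ := by
      rw [norm_mul, norm_pow, Complex.norm_real, Real.norm_of_nonneg hq0.le]
      nlinarith [norm_nonneg x, pow_le_one₀ hq0.le hq1.le (n := N), pow_pos hq0 N]
    calc ‖Sq q (x * (q : ℂ) ^ N) - 1‖ ≤ ‖x * (q : ℂ) ^ N‖ * C := htail _ hyx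
      _ = (‖x‖ * C) * q ^ N := by
          rw [norm_mul, norm_pow, Complex.norm_real, Real.norm_of_nonneg hq0.le]
          ring
  have h0 : Tendsto (fun N : ℕ => Sq q (x * (q : ℂ) ^ N) - 1) atTop (𝓝 0) := by
    refine squeeze_zero_norm hbound ?_
    simpa using (tendsto_pow_atTop_nhds_zero_of_lt_one hq0.le hq1).const_mul (‖x‖ * C)
  have := h0.add_const 1
  simpa using this

lemma euler (hq0 : 0 < q) (hq1 : q < 1) {x : ℂ} (hx : ‖x‖ < 1) :
    qPochInf q x * Sq q x = 1 := by
  have h1 : Tendsto (fun N : ℕ => qPoch q x N * Sq q x) atTop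
      (𝓝 (qPochInf q x * Sq q x)) := by
    have := (multipliable_qfac hq0 hq1 x).hasProd.tendsto_prod_nat
    exact this.mul_const _
  have h2 := (h1.congr fun N => Sq_iterate hq0 hq1 hx N)
  exact tendsto_nhds_unique h2 (Sq_tail_tendsto hq0 hq1 hx)

lemma qPochInf_ne_zero (hq0 : 0 < q) (hq1 : q < 1) {x : ℂ} (hx : ‖x‖ < 1) :
    qPochInf q x ≠ 0 :=
  left_ne_zero_of_mul_eq_one (euler hq0 hq1 hx)


noncomputable def Ff (q : ℝ) (z t : ℂ) : ℤ × ℕ → ℂ := fun p =>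
  t ^ p.1 * z ^ p.1 *
    (qPochInf q ((q : ℂ) ^ p.2 * (q : ℂ) ^ (p.1 + 1)) * (-z ^ 2) ^ p.2 / qPoch q (q : ℂ) p.2) /
    qPochInf q (q : ℂ)

noncomputable def Gg (q : ℝ) (z t : ℂ) : ℕ × ℕ → ℂ := fun p =>
  (t * z) ^ p.1 / qPoch q (q : ℂ) p.1 * ((-t⁻¹ * z) ^ p.2 / qPoch q (q : ℂ) p.2)

def pairEmb : ℕ × ℕ → ℤ × ℕ := fun p => ((p.1 : ℤ) - p.2, p.2)

lemma em_inj : Function.Injective pairEmb := by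
  rintro ⟨a, b⟩ ⟨c, d⟩ h
  simp only [pairEmb] at h
  have h1' : (a : ℤ) - b = (c : ℤ) - d := congrArg Prod.fst h
  have h2' : b = d := congrArg Prod.snd h
  simp only [Prod.mk.injEq]
  omega

set_option maxHeartbeats 1000000 in
/-- Generating function (2.12) for Jackson's first q-Bessel function:
`1/((tz;q)_∞(-t⁻¹z;q)_∞) = ∑_{n∈ℤ} tⁿ zⁿ (q^{n+1};q)_∞ ₂φ₁(0,0;q^{n+1};q,-z²)/(q;q)_∞`
for `|z| < |t| < |z|⁻¹`, with absolute convergence. -/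
theorem stmt7 (q : ℝ) (hq0 : 0 < q) (hq1 : q < 1) (z t : ℂ) (hz : z ≠ 0)
    (h1 : ‖z‖ < ‖t‖) (h2 : ‖t‖ < ‖z‖⁻¹) :
    (Summable fun n : ℤ =>
      ‖t ^ n * z ^ n * Gqb q (-z ^ 2) ((q : ℂ) ^ (n + 1)) / qPochInf q (q : ℂ)‖) ∧
    ∑' n : ℤ, t ^ n * z ^ n * Gqb q (-z ^ 2) ((q : ℂ) ^ (n + 1)) / qPochInf q (q : ℂ) =
      1 / (qPochInf q (t * z) * qPochInf q (-t⁻¹ * z)) := by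
  have hQ0 : (q : ℂ) ≠ 0 := by exact_mod_cast hq0.ne'
  have hz0 : 0 < ‖z‖ := norm_pos_iff.mpr hz
  have ht0' : 0 < ‖t‖ := lt_trans hz0 h1
  have ht : t ≠ 0 := by
    intro h; rw [h] at ht0'; simp at ht0'
  have hz2 : ‖z‖ * ‖z‖ < 1 := by
    have h3 : ‖z‖ < ‖z‖⁻¹ := h1.trans h2
    have := mul_lt_mul_of_pos_left h3 hz0
    rwa [mul_inv_cancel₀ hz0.ne'] at this
  have hA : ‖t * z‖ < 1 := by
    rw [norm_mul]
    calc ‖t‖ * ‖z‖ < ‖z‖⁻¹ * ‖z‖ :=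
          mul_lt_mul_of_pos_right h2 hz0
      _ = 1 := inv_mul_cancel₀ hz0.ne'
  have hB : ‖-t⁻¹ * z‖ < 1 := by
    rw [norm_mul, norm_neg, norm_inv]
    rw [inv_mul_eq_div, div_lt_one ht0']
    exact h1
  have hsplit : ∀ k : ℕ, qPochInf q ((q : ℂ) ^ (k + 1)) =
      qPochInf q (q : ℂ) / qPoch q (q : ℂ) k := by
    intro k
    have hs := qPochInf_split hq0 hq1 (q : ℂ) k
    rw [eq_div_iff (qPoch_q_ne hq0 hq1 k)]
    rw [hs, pow_succ']
    ring
  have hP : qPochInf q (q : ℂ) ≠ 0 := by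
    apply qPochInf_ne_zero hq0 hq1
    rw [Complex.norm_real, Real.norm_of_nonneg hq0.le]
    exact hq1
  have hFe : ∀ p : ℕ × ℕ, Ff q z t (pairEmb p) = Gg q z t p := by
    rintro ⟨k, m⟩
    simp only [Ff, Gg, pairEmb]
    have hzp : (q : ℂ) ^ (m : ℕ) * (q : ℂ) ^ ((k : ℤ) - m + 1) = (q : ℂ) ^ (k + 1 : ℕ) := by
      rw [show ((q : ℂ) ^ (m : ℕ) = (q : ℂ) ^ (m : ℤ)) from (zpow_natCast _ _).symm,
        ← zpow_add₀ hQ0, show ((m : ℤ) + ((k : ℤ) - m + 1)) = ((k + 1 : ℕ) : ℤ) by push_cast; ring,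
        zpow_natCast]
    rw [hzp, hsplit k]
    have htk : t ^ ((k : ℤ) - m) = t ^ k * (t ^ m)⁻¹ := by
      rw [zpow_sub₀ ht, zpow_natCast, zpow_natCast, div_eq_mul_inv]
    have hzk : z ^ ((k : ℤ) - m) = z ^ k * (z ^ m)⁻¹ := by
      rw [zpow_sub₀ hz, zpow_natCast, zpow_natCast, div_eq_mul_inv]
    rw [htk, hzk]
    field_simp [qPoch_q_ne hq0 hq1, ht, hz]
    have htm : t ^ m * t⁻¹ ^ m = 1 := by rw [← mul_pow, mul_inv_cancel₀ ht, one_pow]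
    linear_combination (t ^ k * z ^ k * z ^ (m * 2) * (-1) ^ m) * htm.symm
  have hF0 : ∀ x ∉ Set.range pairEmb, Ff q z t x = 0 := by
    rintro ⟨n, m⟩ hx
    have hnm : n + (m : ℤ) < 0 := by
      by_contra hcon
      push_neg at hcon
      refine hx ⟨((n + m).toNat, m), ?_⟩
      simp only [pairEmb]
      have heq : (((n + m).toNat : ℤ)) - m = n := by omega
      rw [heq]
    have hkey : 1 - ((q : ℂ) ^ (m : ℕ) * (q : ℂ) ^ (n + 1)) * (q : ℂ) ^ ((-(m + n + 1)).toNat) = 0 := by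
      have heq1 : ((q : ℂ) ^ (m : ℕ) * (q : ℂ) ^ (n + 1)) * (q : ℂ) ^ ((-(m + n + 1)).toNat) = 1 := by
        rw [show ((q : ℂ) ^ (m : ℕ) = (q : ℂ) ^ (m : ℤ)) from (zpow_natCast _ _).symm,
          show ((q : ℂ) ^ ((-(m + n + 1)).toNat) = (q : ℂ) ^ (((-(m + n + 1)).toNat : ℤ))) from
            (zpow_natCast _ _).symm, ← zpow_add₀ hQ0, ← zpow_add₀ hQ0,
          show ((m : ℤ) + (n + 1) + ((-(m + n + 1)).toNat : ℤ)) = 0 by omega, zpow_zero]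
      rw [heq1, sub_self]
    have hzero : qPochInf q ((q : ℂ) ^ (m : ℕ) * (q : ℂ) ^ (n + 1)) = 0 :=
      qPochInf_eq_zero hkey
    simp only [Ff, hzero, zero_mul, zero_div, mul_zero]
  have hG2norm : Summable fun p : ℕ × ℕ => ‖Gg q z t p‖ :=
    Summable.mul_norm (f := fun k : ℕ => (t * z) ^ k / qPoch q (q : ℂ) k)
      (g := fun m : ℕ => (-t⁻¹ * z) ^ m / qPoch q (q : ℂ) m)
      (summable_norm_geomPoch hq0 hq1 hA) (summable_norm_geomPoch hq0 hq1 hB)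
  have hFnorm : Summable fun x : ℤ × ℕ => ‖Ff q z t x‖ := by
    have hF0' : ∀ x ∉ Set.range pairEmb, ‖Ff q z t x‖ = 0 := fun x hx => by
      rw [hF0 x hx, norm_zero]
    have hiff := Function.Injective.summable_iff (f := fun x : ℤ × ℕ => ‖Ff q z t x‖) em_inj hF0'
    exact hiff.1 (hG2norm.congr fun p => by
      show ‖Gg q z t p‖ = ‖Ff q z t (pairEmb p)‖
      rw [hFe p])
  have hFsum : Summable (Ff q z t) := hFnorm.of_norm
  have htsumFe : ∑' p : ℕ × ℕ, Gg q z t p = ∑' x : ℤ × ℕ, Ff q z t x := by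
    have hsupp : Function.support (Ff q z t) ⊆ Set.range pairEmb := by
      intro x hx
      by_contra hxr
      exact hx (hF0 x hxr)
    have := Function.Injective.tsum_eq em_inj (f := Ff q z t) hsupp
    rw [← this]
    exact tsum_congr fun p => (hFe p).symm
  have hinner : ∀ n : ℤ, ∑' m : ℕ, Ff q z t (n, m) =
      t ^ n * z ^ n * Gqb q (-z ^ 2) ((q : ℂ) ^ (n + 1)) / qPochInf q (q : ℂ) := by
    intro n
    have hterm : ∀ m : ℕ, Ff q z t (n, m) = (t ^ n * z ^ n / qPochInf q (q : ℂ)) *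
        (qPochInf q ((q : ℂ) ^ m * (q : ℂ) ^ (n + 1)) * (-z ^ 2) ^ m / qPoch q (q : ℂ) m) := by
      intro m
      simp only [Ff]
      ring
    rw [tsum_congr hterm, tsum_mul_left, div_mul_eq_mul_div]
    rfl
  have hnorm_inner : ∀ n : ℤ, Summable fun m : ℕ => ‖Ff q z t (n, m)‖ := fun n =>
    Summable.prod_factor (f := fun x : ℤ × ℕ => ‖Ff q z t x‖) hFnorm n
  have hsum_norms : Summable fun n : ℤ => ∑' m : ℕ, ‖Ff q z t (n, m)‖ :=
    ((summable_prod_of_nonneg fun p => norm_nonneg (Ff q z t p)).1 hFnorm).2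
  constructor
  · apply Summable.of_nonneg_of_le (fun n => norm_nonneg _) (fun n => ?_) hsum_norms
    rw [← hinner n]
    exact norm_tsum_le_tsum_norm (hnorm_inner n)
  · have hE1 := euler hq0 hq1 hA
    have hE2 := euler hq0 hq1 hB
    have n1 : qPochInf q (t * z) ≠ 0 := left_ne_zero_of_mul_eq_one hE1
    have n2 : qPochInf q (-t⁻¹ * z) ≠ 0 := left_ne_zero_of_mul_eq_one hE2
    calc ∑' n : ℤ, t ^ n * z ^ n * Gqb q (-z ^ 2) ((q : ℂ) ^ (n + 1)) / qPochInf q (q : ℂ)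
        = ∑' n : ℤ, ∑' m : ℕ, Ff q z t (n, m) := tsum_congr fun n => (hinner n).symm
      _ = ∑' p : ℤ × ℕ, Ff q z t p := (Summable.tsum_prod' hFsum fun n => Summable.prod_factor (f := Ff q z t) hFsum n).symm
      _ = ∑' p : ℕ × ℕ, Gg q z t p := htsumFe.symm
      _ = (∑' k : ℕ, (t * z) ^ k / qPoch q (q : ℂ) k) *
            (∑' m : ℕ, (-t⁻¹ * z) ^ m / qPoch q (q : ℂ) m) :=
          (tsum_mul_tsum_of_summable_norm (f := fun k : ℕ => (t * z) ^ k / qPoch q (q : ℂ) k)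
            (g := fun m : ℕ => (-t⁻¹ * z) ^ m / qPoch q (q : ℂ) m)
            (summable_norm_geomPoch hq0 hq1 hA)
            (summable_norm_geomPoch hq0 hq1 hB)).symm
      _ = Sq q (t * z) * Sq q (-t⁻¹ * z) := rfl
      _ = 1 / (qPochInf q (t * z) * qPochInf q (-t⁻¹ * z)) := by
          rw [eq_div_iff (mul_ne_zero n1 n2)]
          calc Sq q (t * z) * Sq q (-t⁻¹ * z) * (qPochInf q (t * z) * qPochInf q (-t⁻¹ * z))
              = (qPochInf q (t * z) * Sq q (t * z)) *
                (qPochInf q (-t⁻¹ * z) * Sq q (-t⁻¹ * z)) := by ring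
            _ = 1 := by rw [hE1, hE2, mul_one]
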